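/- Let (X,τ) be a topological space and A ⊆ X a preopen set (A ⊆ interior(closure(A))). For each x ∈ A \ interior(A) let U_x be an open set with x ∈ U_x and U_x ⊆ interior(closure(A)), let I_A be the ideal generated by {U_x \ A : x ∈ A \ interior(A)}, and let τ* be the topology generated by {V \ I : V ∈ τ, I ∈ I_A}. Then the semiregularization of τ equals the semiregularization of τ*, i.e. the topology generated by the regular open sets of τ equals the topology generated by the regular open sets of τ*. -/

import Mathlib

open TopologicalSpace Set Topology

/-!
The sets of the ideal `I_A` lie in `closure A \ A`, so their complements are dense. For any such
ideal `I`, the sets `V \ J` (`V` open, `J ∈ I`) form a basis of `τ*`, and a nonempty basic set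
still meets every `Jᶜ`. Hence `τ` and `τ*` give the same closure to `τ*`-open sets and the same
interior to `τ`-closed sets, so the two topologies have the same regular open sets.
-/

/-- The ideal generated by the sets `U x \ A` for `x ∈ A \ interior A`. -/
def genIdeal {X : Type*} [TopologicalSpace X] (A : Set X) (U : X → Set X) : Set (Set X) :=
  {S | ∃ F : Finset X, ↑F ⊆ A \ interior A ∧ S ⊆ ⋃ x ∈ F, U x \ A}

/-- The topology `τ*` generated by `{V \ I : V open, I in the ideal}`. -/
def starTop {X : Type*} [TopologicalSpace X] (I : Set (Set X)) : TopologicalSpace X :=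
  generateFrom {s | ∃ V J, IsOpen V ∧ J ∈ I ∧ s = V \ J}

/-- The semiregularization of a topology: the topology generated by its regular open sets. -/
def semireg {X : Type*} (t : TopologicalSpace X) : TopologicalSpace X :=
  generateFrom {W : Set X | W = @interior X t (@closure X t W)}

section StarTop

variable {X : Type*} [t : TopologicalSpace X] {I : Set (Set X)}

lemma starTop_le (h0 : ∅ ∈ I) : starTop I ≤ t :=
  fun V hV => GenerateOpen.basic _ ⟨V, ∅, hV, h0, sdiff_empty.symm⟩

lemma isTopologicalBasis_starTop (h0 : ∅ ∈ I) (hU : ∀ J ∈ I, ∀ K ∈ I, J ∪ K ∈ I) :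
    @IsTopologicalBasis X (starTop I) {s | ∃ V J, IsOpen V ∧ J ∈ I ∧ s = V \ J} := by
  refine @IsTopologicalBasis.mk X (starTop I) _ ?_ ?_ rfl
  · rintro _ ⟨V, J, hV, hJ, rfl⟩ _ ⟨V', J', hV', hJ', rfl⟩ x hx
    refine ⟨(V ∩ V') \ (J ∪ J'), ⟨V ∩ V', J ∪ J', hV.inter hV', hU _ hJ _ hJ', rfl⟩, ?_, ?_⟩
    · exact ⟨⟨hx.1.1, hx.2.1⟩, fun h => h.elim hx.1.2 hx.2.2⟩
    · exact fun y hy => ⟨⟨hy.1.1, fun h => hy.2 (.inl h)⟩, ⟨hy.1.2, fun h => hy.2 (.inr h)⟩⟩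
  · exact sUnion_eq_univ_iff.2 fun x => ⟨univ, ⟨univ, ∅, isOpen_univ, h0, by simp⟩, trivial⟩

variable (h0 : ∅ ∈ I) (hU : ∀ J ∈ I, ∀ K ∈ I, J ∪ K ∈ I) (hI : ∀ J ∈ I, Dense Jᶜ)
include h0 hU hI

lemma diff_nonempty_of_isOpen_starTop {W K : Set X} (hW : IsOpen[starTop I] W)
    (hWne : W.Nonempty) (hK : K ∈ I) : (W \ K).Nonempty := by
  obtain ⟨y, hy⟩ := hWne
  obtain ⟨_, ⟨V, J, hV, hJ, rfl⟩, hyV, hVW⟩ :=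
    (isTopologicalBasis_starTop h0 hU).exists_subset_of_mem_open (t := starTop I) hy hW
  obtain ⟨z, hzV, hzJK⟩ := (hI _ (hU J hJ K hK)).inter_open_nonempty V hV ⟨y, hyV.1⟩
  exact ⟨z, hVW ⟨hzV, fun hz => hzJK (.inl hz)⟩, fun hz => hzJK (.inr hz)⟩

lemma closure_starTop_eq {G : Set X} (hG : IsOpen[starTop I] G) :
    closure[starTop I] G = closure G := by
  refine (closure.mono (starTop_le h0)).antisymm fun x hx => ?_
  rw [(isTopologicalBasis_starTop h0 hU).mem_closure_iff (t := starTop I)]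
  rintro _ ⟨V, K, hV, hK, rfl⟩ hxVK
  have hVG : (V ∩ G).Nonempty := mem_closure_iff.1 hx V hV hxVK.1
  rw [← inter_sdiff_right_comm]
  exact diff_nonempty_of_isOpen_starTop h0 hU hI
    (@IsOpen.inter X (starTop I) _ _ (hV.mono (starTop_le h0)) hG) hVG hK

lemma interior_starTop_eq {C : Set X} (hC : IsClosed C) :
    @interior X (starTop I) C = interior C := by
  refine subset_antisymm (fun x hx => ?_)
    (@interior_maximal X (starTop I) _ _ interior_subset (isOpen_interior.mono (starTop_le h0)))
  obtain ⟨_, ⟨V, K, hV, hK, rfl⟩, hxVK, hVKC⟩ :=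
    (isTopologicalBasis_starTop h0 hU).exists_subset_of_mem_open (t := starTop I) hx
      (@isOpen_interior X (starTop I) C)
  refine mem_interior.2 ⟨V, fun v hv => ?_, hV, hxVK.1⟩
  -- `V \ C` is open and misses `V \ K`, so it is contained in `K` and must be empty.
  by_contra hvC
  obtain ⟨z, ⟨hzV, hzC⟩, hzK⟩ := diff_nonempty_of_isOpen_starTop h0 hU hI
    ((hV.sdiff hC).mono (starTop_le h0)) ⟨v, hv, hvC⟩ hK
  exact hzC (@interior_subset X (starTop I) C _ (hVKC ⟨hzV, hzK⟩))

theorem semireg_starTop : semireg t = semireg (starTop I) := by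
  unfold semireg
  congr 1
  ext W
  constructor
  · intro hW
    have hWopen : IsOpen W := hW ▸ isOpen_interior
    rwa [mem_ofPred_eq, closure_starTop_eq h0 hU hI (hWopen.mono (starTop_le h0)),
      interior_starTop_eq h0 hU hI isClosed_closure]
  · intro hW
    have hWopen : IsOpen[starTop I] W := hW ▸ @isOpen_interior X (starTop I) _
    rwa [mem_ofPred_eq, closure_starTop_eq h0 hU hI hWopen,
      interior_starTop_eq h0 hU hI isClosed_closure] at hW

end StarTop

section GenIdeal

variable {X : Type*} [TopologicalSpace X] {A J K : Set X} {U : X → Set X}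

lemma empty_mem_genIdeal : ∅ ∈ genIdeal A U :=
  ⟨∅, by simp, empty_subset _⟩

lemma union_mem_genIdeal (hJ : J ∈ genIdeal A U) (hK : K ∈ genIdeal A U) :
    J ∪ K ∈ genIdeal A U := by
  classical
  obtain ⟨F, hFA, hJF⟩ := hJ
  obtain ⟨G, hGA, hKG⟩ := hK
  refine ⟨F ∪ G, by simpa using union_subset hFA hGA, union_subset ?_ ?_⟩
  · exact hJF.trans (biUnion_subset_biUnion_left fun x hx => Finset.mem_union_left G hx)
  · exact hKG.trans (biUnion_subset_biUnion_left fun x hx => Finset.mem_union_right F hx)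

lemma dense_compl_of_mem_genIdeal (hU : ∀ x ∈ A \ interior A, U x ⊆ closure A)
    (hJ : J ∈ genIdeal A U) : Dense Jᶜ := by
  obtain ⟨F, hFA, hJF⟩ := hJ
  have hJA : J ⊆ closure A \ A := hJF.trans <| iUnion₂_subset fun x hx =>
    sdiff_subset_sdiff_left (hU x (hFA hx))
  exact dense_coborder.mono (compl_subset_compl.2 hJA)

end GenIdeal

theorem stmt10_general {X : Type*} [t : TopologicalSpace X] (A : Set X)
    (U : X → Set X)
    (hUsub : ∀ x ∈ A \ interior A, U x ⊆ interior (closure A)) :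
    semireg t = semireg (starTop (genIdeal A U)) :=
  semireg_starTop empty_mem_genIdeal (fun _ hJ _ hK => union_mem_genIdeal hJ hK)
    fun _ => dense_compl_of_mem_genIdeal fun x hx => (hUsub x hx).trans interior_subset

theorem stmt10 {X : Type*} [t : TopologicalSpace X] (A : Set X)
    (hA : A ⊆ interior (closure A))
    (U : X → Set X)
    (hUopen : ∀ x ∈ A \ interior A, IsOpen (U x))
    (hUmem : ∀ x ∈ A \ interior A, x ∈ U x)
    (hUsub : ∀ x ∈ A \ interior A, U x ⊆ interior (closure A)) :
    semireg t = semireg (starTop (genIdeal A U)) :=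
  stmt10_general (t := t) A U hUsub
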